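/- Let μ be a doubling measure on ℝⁿ and κ ∈ ℕ. Then for the weighted Alpert projection △^μ_{Q;κ} onto the space L²_{Q;κ}(μ), one has for all f ∈ L²(μ): ‖△^μ_{Q;κ} f‖_{L²(μ)} ≤ ‖△^μ_{Q;κ} f‖_{L^∞(μ)} √(|Q|_μ) ≤ C ‖△^μ_{Q;κ} f‖_{L²(μ)}, with C depending only on n, κ and the doubling constant of μ. -/

import Mathlib

open MeasureTheory ENNReal

noncomputable section

/-- The axis-parallel cube in `ℝⁿ` with center `c` and side length `l`. -/
def Cube (n : ℕ) (c : Fin n → ℝ) (l : ℝ) : Set (Fin n → ℝ) :=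
  {x | ∀ i, |x i - c i| ≤ l / 2}

/-- A measure is doubling with constant `C` if `μ(2Q) ≤ C μ(Q)` for all cubes `Q`. -/
def IsDoubling {n : ℕ} (μ : Measure (Fin n → ℝ)) (C : ℝ) : Prop :=
  ∀ (c : Fin n → ℝ) (l : ℝ), 0 < l →
    μ (Cube n c (2 * l)) ≤ ENNReal.ofReal C * μ (Cube n c l)

/-- The center of the dyadic child of the cube with center `c`, side `l`,
determined by the sign pattern `s`. -/
def childCenter (n : ℕ) (c : Fin n → ℝ) (l : ℝ) (s : Fin n → Bool) : Fin n → ℝ :=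
  fun i => c i + (if s i then l / 4 else -(l / 4))

/-- Membership in the space `L²_{Q;κ}(μ)`: a linear combination of indicators of the
`2ⁿ` children of `Q` times polynomials of degree `< κ`, whose `μ`-moments on `Q`
vanish up to order `κ - 1`. -/
def MemAlpertSpace (n κ : ℕ) (μ : Measure (Fin n → ℝ)) (c : Fin n → ℝ) (l : ℝ)
    (h : (Fin n → ℝ) → ℝ) : Prop :=
  (∃ p : (Fin n → Bool) → MvPolynomial (Fin n) ℝ,
      (∀ s, (p s).totalDegree < κ) ∧
      ∀ x, h x = ∑ s : Fin n → Bool,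
        (Cube n (childCenter n c l s) (l / 2)).indicator
          (fun y => MvPolynomial.eval y (p s)) x) ∧
  ∀ β : Fin n → ℕ, (∑ i, β i) < κ →
    ∫ x in Cube n c l, h x * ∏ i, x i ^ β i ∂μ = 0

/-!
The first inequality is Hölder's: `h` is bounded and supported in `Q`.

For the second, note that polynomials of degree `≤ d`, restricted to the unit cube, form a
finite-dimensional space of continuous functions; normalised, they are uniformly equicontinuous.
Hence each of them is at least half its maximum on a subcube of a fixed relative size `ρ` lying
strictly inside the cube, and by affine rescaling the same holds on every cube. Apply this to
the polynomial piece of `h` on the child of `Q` where `|h|` is largest: on that subcube `|h|` is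
comparable to `‖h‖_∞`, and by doubling its `μ`-measure is comparable to `|Q|_μ`, so
`‖h‖_∞² |Q|_μ ≲ ∫ h² dμ`. The subcube must avoid the faces of the child, where the closed children
overlap and `h` is a sum of several pieces.
-/

open MvPolynomial

section Geometry

variable {n : ℕ}

lemma isClosed_cube (c : Fin n → ℝ) (l : ℝ) : IsClosed (Cube n c l) := by
  simp only [Cube, Set.ofPred_forall]
  exact isClosed_iInter fun i => isClosed_le (by fun_prop) continuous_const

lemma measurableSet_cube (c : Fin n → ℝ) (l : ℝ) : MeasurableSet (Cube n c l) :=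
  (isClosed_cube c l).measurableSet

lemma cube_eq_closedBall (c : Fin n → ℝ) {l : ℝ} (hl : 0 ≤ l) :
    Cube n c l = Metric.closedBall c (l / 2) := by
  ext x
  simp [Cube, dist_pi_le_iff (by linarith : (0 : ℝ) ≤ l / 2), Real.dist_eq]

lemma isCompact_cube (c : Fin n → ℝ) {l : ℝ} (hl : 0 ≤ l) : IsCompact (Cube n c l) :=
  cube_eq_closedBall c hl ▸ isCompact_closedBall c (l / 2)

lemma center_mem_cube (c : Fin n → ℝ) {l : ℝ} (hl : 0 ≤ l) : c ∈ Cube n c l := fun i => by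
  simpa using div_nonneg hl zero_le_two

lemma cube_subset_cube {c z : Fin n → ℝ} {l L : ℝ} (h : ∀ i, |c i - z i| + l / 2 ≤ L / 2) :
    Cube n c l ⊆ Cube n z L := fun x hx i =>
  (abs_sub_le (x i) (c i) (z i)).trans (by linarith [hx i, h i])

lemma image_affine_cube (a z : Fin n → ℝ) {m : ℝ} (hm : 0 < m) (ρ : ℝ) :
    (fun u => a + m • u) '' Cube n z ρ = Cube n (a + m • z) (m * ρ) := by
  ext x
  simp only [Set.mem_image, Cube, Set.mem_ofPred_eq]
  constructor
  · rintro ⟨u, hu, rfl⟩ i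
    have : |a i + m * u i - (a i + m * z i)| = m * |u i - z i| := by
      rw [← abs_of_pos hm, ← abs_mul, abs_of_pos hm]; ring_nf
    simp only [Pi.add_apply, Pi.smul_apply, smul_eq_mul, this]
    nlinarith [hu i]
  · intro hx
    refine ⟨m⁻¹ • (x - a), fun i => ?_, by ext i; simp [hm.ne']⟩
    have : |m⁻¹ * (x i - a i) - z i| = m⁻¹ * |x i - (a i + m * z i)| := by
      rw [← abs_of_pos (inv_pos.2 hm), ← abs_mul, abs_of_pos (inv_pos.2 hm)]
      field_simp; ring_nf
    simp only [Pi.smul_apply, Pi.sub_apply, smul_eq_mul, this]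
    have := hx i
    simp only [Pi.add_apply, Pi.smul_apply, smul_eq_mul] at this
    rw [inv_mul_le_iff₀ hm]; linarith

lemma abs_childCenter_sub (c : Fin n → ℝ) {l : ℝ} (hl : 0 ≤ l) (s : Fin n → Bool) (i : Fin n) :
    |childCenter n c l s i - c i| = l / 4 := by
  unfold childCenter
  split_ifs <;> simp [abs_of_nonneg (by positivity : 0 ≤ l / 4)]

lemma abs_childCenter_sub_childCenter (c : Fin n → ℝ) {l : ℝ} (hl : 0 ≤ l)
    {s s' : Fin n → Bool} {i : Fin n} (hs : s i ≠ s' i) :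
    |childCenter n c l s i - childCenter n c l s' i| = l / 2 := by
  unfold childCenter
  rw [abs_eq (by positivity)]
  cases h : s i <;> cases h' : s' i <;> simp only [h, h'] at hs ⊢ <;> grind

lemma cube_child_subset (c : Fin n → ℝ) {l : ℝ} (hl : 0 ≤ l) (s : Fin n → Bool) :
    Cube n (childCenter n c l s) (l / 2) ⊆ Cube n c l :=
  cube_subset_cube fun i => by rw [abs_childCenter_sub c hl]; linarith

lemma notMem_cube_child (c : Fin n → ℝ) {l : ℝ} (hl : 0 ≤ l) {s s' : Fin n → Bool}
    (hs : s' ≠ s) {x : Fin n → ℝ} (hx : ∀ i, |x i - childCenter n c l s i| < l / 4) :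
    x ∉ Cube n (childCenter n c l s') (l / 2) := fun hx' => by
  obtain ⟨i, hi⟩ := Function.ne_iff.1 hs
  have := abs_sub_le (childCenter n c l s' i) (x i) (childCenter n c l s i)
  rw [abs_childCenter_sub_childCenter c hl hi, abs_sub_comm] at this
  linarith [hx' i, hx i]

end Geometry

lemma exists_abs_sub_le_mul_norm_of_dist_lt {X : Type*} [MetricSpace X] [CompactSpace X]
    (W : Submodule ℝ C(X, ℝ)) [FiniteDimensional ℝ W] {ε : ℝ} (hε : 0 < ε) :
    ∃ δ > 0, ∀ g ∈ W, ∀ x y : X, dist x y < δ → |g x - g y| ≤ ε * ‖g‖ := by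
  have hcont : Continuous fun q : W × X => (q.1 : C(X, ℝ)) q.2 :=
    continuous_eval.comp (continuous_subtype_val.prodMap continuous_id)
  obtain ⟨δ, hδ, H⟩ := Metric.uniformContinuousOn_iff.1
    (((isCompact_closedBall (0 : W) 1).prod isCompact_univ).uniformContinuousOn_of_continuous
      hcont.continuousOn) ε hε
  refine ⟨δ, hδ, fun g hg x y hxy => ?_⟩
  rcases eq_or_ne g 0 with rfl | hg0
  · simp
  have hpos : 0 < ‖g‖ := norm_pos_iff.2 hg0
  set u : W := ‖g‖⁻¹ • ⟨g, hg⟩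
  have hu : u ∈ Metric.closedBall (0 : W) 1 := by simp [u, norm_smul, hpos.ne']
  have := H (u, x) ⟨hu, trivial⟩ (u, y) ⟨hu, trivial⟩ (by simpa [Prod.dist_eq] using hxy)
  simp only [u, Real.dist_eq, Submodule.coe_smul, ContinuousMap.smul_apply, smul_eq_mul,
    ← mul_sub, abs_mul, abs_inv, abs_norm, inv_mul_lt_iff₀ hpos] at this
  linarith

namespace MvPolynomial

variable {n : ℕ}

lemma totalDegree_bind₁_le {σ τ R : Type*} [CommSemiring R] {f : σ → MvPolynomial τ R}
    (hf : ∀ i, (f i).totalDegree ≤ 1) (p : MvPolynomial σ R) :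
    (bind₁ f p).totalDegree ≤ p.totalDegree := by
  conv_lhs => rw [p.as_sum, map_sum]
  refine (totalDegree_finsetSum _ _).trans (Finset.sup_le fun d hd => ?_)
  rw [bind₁_monomial]
  refine (totalDegree_mul _ _).trans ?_
  rw [totalDegree_C, zero_add]
  refine (totalDegree_finsetProd _ _).trans
    ((Finset.sum_le_sum fun i _ => ?_).trans (le_totalDegree hd))
  exact (totalDegree_pow _ _).trans (by simpa using Nat.mul_le_mul_left (d i) (hf i))

lemma totalDegree_bind₁_affine_le (a : Fin n → ℝ) (m : ℝ) (p : MvPolynomial (Fin n) ℝ) :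
    (bind₁ (fun i => C (a i) + C m * X i) p).totalDegree ≤ p.totalDegree := by
  refine totalDegree_bind₁_le (fun i => (totalDegree_add _ _).trans (max_le ?_ ?_)) p
  · simp
  · exact (totalDegree_mul _ _).trans (by simp)

lemma eval_bind₁_affine (a u : Fin n → ℝ) (m : ℝ) (p : MvPolynomial (Fin n) ℝ) :
    eval u (bind₁ (fun i => C (a i) + C m * X i) p) = eval (a + m • u) p := by
  rw [eval, eval₂Hom_bind₁]
  congr 2
  ext i
  simp [coe_eval₂Hom]

def toContinuousMapOn {σ : Type*} (s : Set (σ → ℝ)) : MvPolynomial σ ℝ →ₗ[ℝ] C(s, ℝ) where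
  toFun p := ⟨fun x => eval (x : σ → ℝ) p, (continuous_eval p).comp continuous_subtype_val⟩
  map_add' p q := by ext; simp
  map_smul' r p := by ext; simp

end MvPolynomial

lemma abs_lt_half_and_dist_lt_of_mem_cube_smul {n : ℕ} {ρ : ℝ} (hρ : 0 < ρ) (hρ' : ρ ≤ 1 / 2)
    {x₀ u : Fin n → ℝ} (hx₀ : x₀ ∈ Cube n 0 1) (hu : u ∈ Cube n ((1 - 2 * ρ) • x₀) ρ) :
    (∀ i, |u i| < 1 / 2) ∧ dist u x₀ < 2 * ρ := by
  have key : ∀ i, |u i| < 1 / 2 ∧ |u i - x₀ i| < 2 * ρ := fun i => by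
    have h₀ := abs_le.1 (hx₀ i)
    have h₁ := abs_le.1 (hu i)
    simp only [Pi.zero_apply, sub_zero, Pi.smul_apply, smul_eq_mul] at h₀ h₁
    refine ⟨abs_lt.2 ⟨?_, ?_⟩, abs_lt.2 ⟨?_, ?_⟩⟩ <;> nlinarith
  exact ⟨fun i => (key i).1, (dist_pi_lt_iff (by positivity)).2 fun i => by
    simpa [Real.dist_eq] using (key i).2⟩

lemma exists_subcube_unitCube_abs_eval_le_two_mul (n d : ℕ) :
    ∃ ρ > 0, ∀ q : MvPolynomial (Fin n) ℝ, q.totalDegree ≤ d → ∃ z : Fin n → ℝ,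
      ∀ u ∈ Cube n z ρ, (∀ i, |u i| < 1 / 2) ∧
        ∀ v ∈ Cube n 0 1, |eval v q| ≤ 2 * |eval u q| := by
  have : CompactSpace (Cube n 0 1) :=
    isCompact_iff_compactSpace.1 (isCompact_cube 0 zero_le_one)
  let W := (restrictTotalDegree (Fin n) ℝ d).map (toContinuousMapOn (Cube n 0 1))
  obtain ⟨δ, hδ, hW⟩ := exists_abs_sub_le_mul_norm_of_dist_lt W one_half_pos
  obtain ⟨ρ, hρ, hρδ, hρ1⟩ : ∃ ρ : ℝ, 0 < ρ ∧ 2 * ρ ≤ δ ∧ ρ ≤ 1 / 2 :=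
    ⟨min δ 1 / 2, by positivity, by linarith [min_le_left δ 1], by linarith [min_le_right δ 1]⟩
  refine ⟨ρ, hρ, fun q hq => ?_⟩
  set g := toContinuousMapOn (Cube n 0 1) q
  have hg : g ∈ W := Submodule.mem_map_of_mem ((mem_restrictTotalDegree _ _ _).2 hq)
  obtain ⟨x₀, -, hx₀⟩ := isCompact_univ.exists_isMaxOn
    ⟨⟨0, center_mem_cube 0 zero_le_one⟩, trivial⟩ (continuous_abs.comp g.continuous).continuousOn
  have hnorm : ‖g‖ ≤ |g x₀| :=
    (ContinuousMap.norm_le _ (abs_nonneg _)).2 fun x => hx₀ (Set.mem_univ x)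
  refine ⟨(1 - 2 * ρ) • x₀, fun u hu => ?_⟩
  obtain ⟨hlt, hdist⟩ := abs_lt_half_and_dist_lt_of_mem_cube_smul hρ hρ1 x₀.2 hu
  have huQ : u ∈ Cube n 0 1 := fun i => by simpa using (hlt i).le
  refine ⟨hlt, fun v hv => ?_⟩
  have hclose := hW g hg ⟨u, huQ⟩ x₀ (by rw [Subtype.dist_eq]; linarith)
  have hv' : |g ⟨v, hv⟩| ≤ |g x₀| := hx₀ (Set.mem_univ _)
  have := abs_sub_abs_le_abs_sub (g x₀) (g ⟨u, huQ⟩)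
  rw [abs_sub_comm] at this
  change |g ⟨v, hv⟩| ≤ 2 * |g ⟨u, huQ⟩|
  linarith

lemma exists_subcube_abs_eval_le_two_mul (n d : ℕ) :
    ∃ ρ > 0, ∀ p : MvPolynomial (Fin n) ℝ, p.totalDegree ≤ d →
      ∀ (a : Fin n → ℝ) (m : ℝ), 0 < m → ∃ z : Fin n → ℝ,
        ∀ x ∈ Cube n z (ρ * m), (∀ i, |x i - a i| < m / 2) ∧
          ∀ y ∈ Cube n a m, |eval y p| ≤ 2 * |eval x p| := by
  obtain ⟨ρ, hρ, hunit⟩ := exists_subcube_unitCube_abs_eval_le_two_mul n d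
  refine ⟨ρ, hρ, fun p hp a m hm => ?_⟩
  obtain ⟨z, hz⟩ := hunit _ ((totalDegree_bind₁_affine_le a m p).trans hp)
  refine ⟨a + m • z, ?_⟩
  rw [mul_comm, ← image_affine_cube a z hm]
  rintro _ ⟨u, hu, rfl⟩
  obtain ⟨hlt, hle⟩ := hz u hu
  refine ⟨fun i => ?_, ?_⟩
  · have := mul_lt_mul_of_pos_left (hlt i) hm
    simp only [Pi.add_apply, Pi.smul_apply, smul_eq_mul, add_sub_cancel_left, abs_mul,
      abs_of_pos hm]
    linarith
  · have hQ : Cube n a m = (fun v => a + m • v) '' Cube n 0 1 := by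
      simpa using (image_affine_cube a 0 hm 1).symm
    rw [hQ]
    rintro _ ⟨v, hv, rfl⟩
    simpa only [eval_bind₁_affine] using hle v hv

section SquareIntegral

variable {α : Type*} [MeasurableSpace α] {μ : Measure α} {h : α → ℝ} {B : ℝ}

lemma integrable_sq_of_abs_le {s : Set α} (hμs : μ s ≠ ∞) (hsupp : ∀ x ∉ s, h x = 0)
    (hmeas : AEStronglyMeasurable h μ) (hbound : ∀ x, |h x| ≤ B) :
    Integrable (fun x => h x ^ 2) μ := by
  refine (integrableOn_iff_integrable_of_support_subset fun x hx => ?_).1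
    (Measure.integrableOn_of_bounded hμs (hmeas.pow 2) (M := B ^ 2) (ae_of_all _ fun x => ?_))
  · by_contra hxs
    simp [hsupp x hxs] at hx
  · rw [Real.norm_eq_abs, abs_pow]
    exact pow_le_pow_left₀ (abs_nonneg _) (hbound x) 2

lemma sqrt_integral_sq_le_essSup_abs_mul_sqrt {s : Set α} (hμs : μ s ≠ ∞)
    (hsupp : ∀ x ∉ s, h x = 0) (hmeas : AEStronglyMeasurable h μ) (hbound : ∀ x, |h x| ≤ B) :
    Real.sqrt (∫ x, h x ^ 2 ∂μ) ≤
      essSup (fun x => |h x|) μ * Real.sqrt (μ s).toReal := by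
  rcases eq_or_ne μ 0 with rfl | hμ
  · simp
  have : (ae μ).NeBot := ae_neBot.2 hμ
  set M := essSup (fun x => |h x|) μ
  have hM : ∀ᵐ x ∂μ, |h x| ≤ M := ae_le_essSup (Filter.isBoundedUnder_of ⟨B, hbound⟩)
  have hM0 : 0 ≤ M := let ⟨_, hx⟩ := hM.exists; (abs_nonneg _).trans hx
  have hint : ∫ x, h x ^ 2 ∂μ ≤ M ^ 2 * (μ s).toReal := by
    rw [← setIntegral_eq_integral_of_forall_compl_eq_zero fun x hx => by simp [hsupp x hx]]
    calc ∫ x in s, h x ^ 2 ∂μ ≤ ∫ _ in s, M ^ 2 ∂μ :=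
          integral_mono_ae (integrable_sq_of_abs_le hμs hsupp hmeas hbound).integrableOn
            (integrableOn_const hμs) (ae_restrict_of_ae (hM.mono fun x hx => by
              simpa only [sq_abs] using pow_le_pow_left₀ (abs_nonneg (h x)) hx 2))
      _ = M ^ 2 * (μ s).toReal := by simp [measureReal_def, mul_comm]
  calc Real.sqrt (∫ x, h x ^ 2 ∂μ) ≤ Real.sqrt (M ^ 2 * (μ s).toReal) := Real.sqrt_le_sqrt hint
    _ = M * Real.sqrt (μ s).toReal := by rw [Real.sqrt_mul (sq_nonneg M), Real.sqrt_sq hM0]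

lemma sq_mul_measure_toReal_le_integral_sq {t : Set α} {K : ℝ} (hB : 0 ≤ B)
    (hlow : ∀ x ∈ t, B ≤ K * |h x|) (ht : MeasurableSet t) (hμt : μ t ≠ ∞)
    (hint : Integrable (fun x => h x ^ 2) μ) :
    B ^ 2 * (μ t).toReal ≤ K ^ 2 * ∫ x, h x ^ 2 ∂μ :=
  calc B ^ 2 * (μ t).toReal = ∫ _ in t, B ^ 2 ∂μ := by simp [measureReal_def, mul_comm]
    _ ≤ ∫ x in t, K ^ 2 * h x ^ 2 ∂μ :=
        setIntegral_mono_on (integrableOn_const hμt) (hint.const_mul _).integrableOn ht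
          fun x hx => by simpa only [mul_pow, sq_abs] using pow_le_pow_left₀ hB (hlow x hx) 2
    _ ≤ K ^ 2 * ∫ x, h x ^ 2 ∂μ := by
        rw [integral_const_mul]
        exact mul_le_mul_of_nonneg_left
          (setIntegral_le_integral hint (ae_of_all _ fun x => sq_nonneg _)) (sq_nonneg K)

lemma essSup_abs_mul_sqrt_le {s t : Set α} {K D : ℝ} (hbound : ∀ x, |h x| ≤ B) (hK : 0 ≤ K)
    (hlow : ∀ x ∈ t, B ≤ K * |h x|) (ht : MeasurableSet t) (hμt : μ t ≠ ∞) (hD : 0 ≤ D)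
    (hst : (μ s).toReal ≤ D * (μ t).toReal) (hint : Integrable (fun x => h x ^ 2) μ) :
    essSup (fun x => |h x|) μ * Real.sqrt (μ s).toReal ≤
      K * Real.sqrt D * Real.sqrt (∫ x, h x ^ 2 ∂μ) := by
  rcases eq_or_ne μ 0 with rfl | hμ
  · simp
  have : (ae μ).NeBot := ae_neBot.2 hμ
  obtain ⟨x₀, -⟩ := (ae_of_all μ fun _ => trivial : ∀ᵐ _ ∂μ, True).exists
  have hB0 : 0 ≤ B := (abs_nonneg _).trans (hbound x₀)
  have hM : essSup (fun x => |h x|) μ ≤ B :=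
    essSup_le_of_ae_le B (ae_of_all _ hbound)
      (Filter.isCoboundedUnder_le_of_le _ fun x => abs_nonneg _)
  have hmass := sq_mul_measure_toReal_le_integral_sq hB0 hlow ht hμt hint
  calc essSup (fun x => |h x|) μ * Real.sqrt (μ s).toReal
      ≤ B * Real.sqrt (D * (μ t).toReal) :=
        mul_le_mul hM (Real.sqrt_le_sqrt hst) (Real.sqrt_nonneg _) hB0
    _ = Real.sqrt D * Real.sqrt (B ^ 2 * (μ t).toReal) := by
        rw [Real.sqrt_mul hD, Real.sqrt_mul (sq_nonneg B), Real.sqrt_sq hB0]; ring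
    _ ≤ Real.sqrt D * Real.sqrt (K ^ 2 * ∫ x, h x ^ 2 ∂μ) := by gcongr
    _ = K * Real.sqrt D * Real.sqrt (∫ x, h x ^ 2 ∂μ) := by
        rw [Real.sqrt_mul (sq_nonneg K), Real.sqrt_sq hK]; ring

end SquareIntegral

section Doubling

variable {n : ℕ} {μ : Measure (Fin n → ℝ)} {Cd : ℝ}

lemma IsDoubling.measure_cube_two_pow_mul_le (hd : IsDoubling μ Cd) (j : ℕ) (z : Fin n → ℝ)
    {t : ℝ} (ht : 0 < t) :
    μ (Cube n z (2 ^ j * t)) ≤ ENNReal.ofReal Cd ^ j * μ (Cube n z t) := by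
  induction j with
  | zero => simp
  | succ j ih =>
    calc μ (Cube n z (2 ^ (j + 1) * t)) = μ (Cube n z (2 * (2 ^ j * t))) := by ring_nf
      _ ≤ ENNReal.ofReal Cd * μ (Cube n z (2 ^ j * t)) := hd z _ (by positivity)
      _ ≤ ENNReal.ofReal Cd * (ENNReal.ofReal Cd ^ j * μ (Cube n z t)) := by gcongr
      _ = ENNReal.ofReal Cd ^ (j + 1) * μ (Cube n z t) := by ring

lemma IsDoubling.measure_toReal_le_of_subset_cube [IsLocallyFiniteMeasure μ]
    (hd : IsDoubling μ Cd) {s : Set (Fin n → ℝ)} {j : ℕ} {z : Fin n → ℝ} {t : ℝ}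
    (hs : s ⊆ Cube n z (2 ^ j * t)) (ht : 0 < t) :
    (μ s).toReal ≤ (ENNReal.ofReal Cd ^ j).toReal * (μ (Cube n z t)).toReal := by
  rw [← ENNReal.toReal_mul]
  exact ENNReal.toReal_mono
    (ENNReal.mul_ne_top (by simp) (isCompact_cube z ht.le).measure_lt_top.ne)
    ((measure_mono hs).trans (hd.measure_cube_two_pow_mul_le j z ht))

end Doubling

def childPiecewise (n : ℕ) (c : Fin n → ℝ) (l : ℝ) (p : (Fin n → Bool) → MvPolynomial (Fin n) ℝ)
    (x : Fin n → ℝ) : ℝ :=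
  ∑ s, (Cube n (childCenter n c l s) (l / 2)).indicator (fun y => eval y (p s)) x

section ChildPiecewise

variable {n : ℕ} {c : Fin n → ℝ} {l : ℝ} {p : (Fin n → Bool) → MvPolynomial (Fin n) ℝ}

lemma measurable_childPiecewise : Measurable (childPiecewise n c l p) :=
  Finset.measurable_sum _ fun s _ =>
    (continuous_eval (p s)).measurable.indicator (measurableSet_cube _ _)

lemma childPiecewise_eq_zero (hl : 0 ≤ l) {x : Fin n → ℝ} (hx : x ∉ Cube n c l) :
    childPiecewise n c l p x = 0 :=
  Finset.sum_eq_zero fun s _ =>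
    Set.indicator_of_notMem (fun hxs => hx (cube_child_subset c hl s hxs)) _

lemma childPiecewise_eq_of_abs_sub_lt (hl : 0 ≤ l) {s : Fin n → Bool} {x : Fin n → ℝ}
    (hx : ∀ i, |x i - childCenter n c l s i| < l / 4) :
    childPiecewise n c l p x = eval x (p s) := by
  rw [childPiecewise, Finset.sum_eq_single s
    (fun s' _ hs' => Set.indicator_of_notMem (notMem_cube_child c hl hs' hx) _) (by simp)]
  have hxs : x ∈ Cube n (childCenter n c l s) (l / 2) := fun i => (hx i).le.trans (by linarith)
  exact Set.indicator_of_mem hxs _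

lemma abs_childPiecewise_le {A : ℝ} (hA0 : 0 ≤ A)
    (hA : ∀ s, ∀ y ∈ Cube n (childCenter n c l s) (l / 2), |eval y (p s)| ≤ A)
    (x : Fin n → ℝ) : |childPiecewise n c l p x| ≤ 2 ^ n * A :=
  calc |childPiecewise n c l p x|
      ≤ ∑ s, |(Cube n (childCenter n c l s) (l / 2)).indicator (fun y => eval y (p s)) x| :=
        Finset.abs_sum_le_sum_abs _ _
    _ ≤ ∑ _s : Fin n → Bool, A := Finset.sum_le_sum fun s _ => by
        by_cases hx : x ∈ Cube n (childCenter n c l s) (l / 2)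
        · rw [Set.indicator_of_mem hx]; exact hA s x hx
        · rw [Set.indicator_of_notMem hx, abs_zero]; exact hA0
    _ = 2 ^ n * A := by simp

lemma exists_max_abs_eval_on_children (c : Fin n → ℝ) (hl : 0 ≤ l)
    (p : (Fin n → Bool) → MvPolynomial (Fin n) ℝ) :
    ∃ s₀, ∃ y₀ ∈ Cube n (childCenter n c l s₀) (l / 2),
      ∀ s, ∀ y ∈ Cube n (childCenter n c l s) (l / 2), |eval y (p s)| ≤ |eval y₀ (p s₀)| := by
  have hl' : 0 ≤ l / 2 := by positivity
  choose y hy hmax using fun s => (isCompact_cube (childCenter n c l s) hl').exists_isMaxOn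
    ⟨_, center_mem_cube _ hl'⟩ (continuous_eval (p s)).abs.continuousOn
  obtain ⟨s₀, -, hs₀⟩ := Finset.exists_max_image Finset.univ (fun s => |eval (y s) (p s)|)
    Finset.univ_nonempty
  exact ⟨s₀, y s₀, hy s₀, fun s z hz => (hmax s hz).trans (hs₀ s (Finset.mem_univ s))⟩

lemma cube_subset_of_mem_cube_child (hl : 0 ≤ l) {s : Fin n → Bool} {z : Fin n → ℝ}
    (hz : z ∈ Cube n (childCenter n c l s) (l / 2)) {L : ℝ} (hL : 2 * l ≤ L) :
    Cube n c l ⊆ Cube n z L :=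
  cube_subset_cube fun i => by
    have := abs_sub_le (c i) (childCenter n c l s i) (z i)
    rw [abs_sub_comm (c i) (childCenter n c l s i), abs_childCenter_sub c hl,
      abs_sub_comm (childCenter n c l s i) (z i)] at this
    linarith [hz i]

variable {μ : Measure (Fin n → ℝ)} [IsLocallyFiniteMeasure μ]

lemma sqrt_integral_sq_childPiecewise_le (hl : 0 ≤ l) :
    Real.sqrt (∫ x, childPiecewise n c l p x ^ 2 ∂μ) ≤
      essSup (fun x => |childPiecewise n c l p x|) μ * Real.sqrt (μ (Cube n c l)).toReal := by
  obtain ⟨s₀, y₀, -, hmax⟩ := exists_max_abs_eval_on_children c hl p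
  exact sqrt_integral_sq_le_essSup_abs_mul_sqrt (isCompact_cube c hl).measure_lt_top.ne
    (fun x => childPiecewise_eq_zero hl) measurable_childPiecewise.aestronglyMeasurable
    (abs_childPiecewise_le (abs_nonneg _) hmax)

lemma essSup_abs_childPiecewise_mul_sqrt_le {Cd : ℝ} (hd : IsDoubling μ Cd) (hl : 0 < l)
    {s₀ : Fin n → Bool} {y₀ : Fin n → ℝ} (hy₀ : y₀ ∈ Cube n (childCenter n c l s₀) (l / 2))
    (hmax : ∀ s, ∀ y ∈ Cube n (childCenter n c l s) (l / 2), |eval y (p s)| ≤ |eval y₀ (p s₀)|)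
    {z : Fin n → ℝ} {t : ℝ} {j : ℕ} (ht : 0 < t) (hjt : 2 * l ≤ 2 ^ j * t)
    (hz : ∀ x ∈ Cube n z t, (∀ i, |x i - childCenter n c l s₀ i| < l / 2 / 2) ∧
      ∀ y ∈ Cube n (childCenter n c l s₀) (l / 2), |eval y (p s₀)| ≤ 2 * |eval x (p s₀)|) :
    essSup (fun x => |childPiecewise n c l p x|) μ * Real.sqrt (μ (Cube n c l)).toReal ≤
      2 ^ (n + 1) * Real.sqrt (ENNReal.ofReal Cd ^ j).toReal *
        Real.sqrt (∫ x, childPiecewise n c l p x ^ 2 ∂μ) := by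
  have hbound := abs_childPiecewise_le (abs_nonneg _) hmax
  have hlow : ∀ x ∈ Cube n z t,
      2 ^ n * |eval y₀ (p s₀)| ≤ 2 ^ (n + 1) * |childPiecewise n c l p x| := fun x hx => by
    obtain ⟨hlt, hle⟩ := hz x hx
    rw [childPiecewise_eq_of_abs_sub_lt (s := s₀) hl.le fun i => by linarith [hlt i], pow_succ,
      mul_assoc]
    exact mul_le_mul_of_nonneg_left (hle y₀ hy₀) (by positivity)
  have hcover : Cube n c l ⊆ Cube n z (2 ^ j * t) :=
    cube_subset_of_mem_cube_child hl.le (fun i => ((hz z (center_mem_cube z ht.le)).1 i).le) hjt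
  exact essSup_abs_mul_sqrt_le hbound (by positivity) hlow (measurableSet_cube z t)
    (isCompact_cube z ht.le).measure_lt_top.ne ENNReal.toReal_nonneg
    (hd.measure_toReal_le_of_subset_cube hcover ht)
    (integrable_sq_of_abs_le (isCompact_cube c hl.le).measure_lt_top.ne
      (fun x => childPiecewise_eq_zero hl.le) measurable_childPiecewise.aestronglyMeasurable hbound)

end ChildPiecewise

/-- For a doubling measure `μ`, the weighted Alpert projection `h = △^μ_{Q;κ} f`
satisfies `‖h‖_{L²(μ)} ≤ ‖h‖_{L^∞(μ)} √(|Q|_μ) ≤ C ‖h‖_{L²(μ)}`. -/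
theorem alpert_projection_sup_bound (n κ : ℕ) (Cd : ℝ) :
    ∃ C : ℝ, 0 < C ∧
      ∀ (μ : Measure (Fin n → ℝ)), IsLocallyFiniteMeasure μ → IsDoubling μ Cd →
      ∀ (c : Fin n → ℝ) (l : ℝ), 0 < l →
      ∀ (f h : (Fin n → ℝ) → ℝ),
        MemLp f 2 μ →
        MemAlpertSpace n κ μ c l h →
        -- `h` is the orthogonal projection of `f` onto `L²_{Q;κ}(μ)`
        (∀ h' : (Fin n → ℝ) → ℝ, MemAlpertSpace n κ μ c l h' →
          ∫ x, (f x - h x) * h' x ∂μ = 0) →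
        Real.sqrt (∫ x, (h x) ^ 2 ∂μ) ≤
            essSup (fun x => |h x|) μ * Real.sqrt (μ (Cube n c l)).toReal ∧
          essSup (fun x => |h x|) μ * Real.sqrt (μ (Cube n c l)).toReal ≤
            C * Real.sqrt (∫ x, (h x) ^ 2 ∂μ) := by
  obtain ⟨ρ, hρ, hsub⟩ := exists_subcube_abs_eval_le_two_mul n κ
  obtain ⟨j, hj⟩ := pow_unbounded_of_one_lt (4 / ρ) one_lt_two
  refine ⟨2 ^ (n + 1) * Real.sqrt (ENNReal.ofReal Cd ^ j).toReal + 1, by positivity, ?_⟩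
  rintro μ hloc hd c l hl f h - ⟨⟨p, hdeg, hrep⟩, -⟩ -
  obtain rfl : h = childPiecewise n c l p := funext hrep
  refine ⟨sqrt_integral_sq_childPiecewise_le hl.le, ?_⟩
  obtain ⟨s₀, y₀, hy₀, hmax⟩ := exists_max_abs_eval_on_children c hl.le p
  obtain ⟨z, hz⟩ := hsub (p s₀) (hdeg s₀).le (childCenter n c l s₀) (l / 2) (by positivity)
  have hjt : 2 * l ≤ 2 ^ j * (ρ * (l / 2)) := by
    rw [div_lt_iff₀ hρ] at hj
    nlinarith
  calc _ ≤ _ := essSup_abs_childPiecewise_mul_sqrt_le hd hl hy₀ hmax (by positivity) hjt hz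
    _ ≤ _ := by gcongr; linarith
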